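/- arXiv:2101.02546 — 5 statements merged into one kernel-verified Lean document; each statement's English description precedes it below -/
import Mathlib

section
/- Let A be an n×n transition matrix (viewed as the adjacency matrix of a finite directed graph on vertices {1,...,n}). If A is transitive (for any two vertices i,j there is a directed path from i to j) and A is not a permutation matrix, then A satisfies condition (I): for every vertex i there is a directed path starting at i and ending at some vertex j which lies on two distinct first-return cycles (i.e., there exist two distinct admissible words of length ≥ 2 starting and ending at j whose interior letters differ from j). -/
/-- `w 0, w 1, ..., w (r-1)` is an admissible word for the transition matrix `A`. -/
def AdmissibleWord {n : ℕ} (A : Fin n → Fin n → Bool) (r : ℕ) (w : ℕ → Fin n) : Prop :=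
  ∀ k, k + 1 < r → A (w k) (w (k + 1)) = true

/-- A first-return word at `i`: an admissible word of length at least `2` starting and
ending at `i`, with no interior letter equal to `i`. -/
def FirstReturnWord {n : ℕ} (A : Fin n → Fin n → Bool) (i : Fin n) (r : ℕ) (w : ℕ → Fin n) : Prop :=
  2 ≤ r ∧ AdmissibleWord A r w ∧ w 0 = i ∧ w (r - 1) = i ∧ ∀ k, 0 < k → k < r - 1 → w k ≠ i

/-- `i` lies in the set `𝒮`: there exist two distinct first-return words at `i`. -/
def MemS {n : ℕ} (A : Fin n → Fin n → Bool) (i : Fin n) : Prop :=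
  ∃ (r s : ℕ) (w v : ℕ → Fin n), FirstReturnWord A i r w ∧ FirstReturnWord A i s v ∧
    (r ≠ s ∨ ∃ k, k < r ∧ w k ≠ v k)

/-- Condition (I): from every vertex there is an admissible word ending in `𝒮`. -/
def ConditionI {n : ℕ} (A : Fin n → Fin n → Bool) : Prop :=
  ∀ i : Fin n, ∃ (r : ℕ) (w : ℕ → Fin n),
    1 ≤ r ∧ AdmissibleWord A r w ∧ w 0 = i ∧ MemS A (w (r - 1))

/-! If a vertex `i` has two distinct successors `a ≠ b`, transitivity gives words from `a` and
from `b` back to `i`; prefixing `i` and cutting at the first return to `i` yields two first-return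
words at `i` that differ in their second letter, so `i ∈ 𝒮`. Since every vertex has a successor,
a matrix that is not a permutation matrix has a row or a column with two ones; a column of `A`
is a row of its transpose, and reversing words carries first-return words of the transpose to
those of `A`. By transitivity every vertex then reaches that element of `𝒮`. -/

section

variable {n : ℕ} {A : Fin n → Fin n → Bool} {i a b : Fin n} {r s : ℕ} {w : ℕ → Fin n}

def IsTransitive (A : Fin n → Fin n → Bool) : Prop :=
  ∀ i j : Fin n, ∃ (r : ℕ) (w : ℕ → Fin n),
    2 ≤ r ∧ AdmissibleWord A r w ∧ w 0 = i ∧ w (r - 1) = j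

theorem AdmissibleWord.mono (h : AdmissibleWord A r w) (hs : s ≤ r) : AdmissibleWord A s w :=
  fun k hk => h k (by omega)

theorem AdmissibleWord.reverse (h : AdmissibleWord A r w) :
    AdmissibleWord (flip A) r (fun k => w (r - 1 - k)) := by
  intro k hk
  have := h (r - 1 - (k + 1)) (by omega)
  rwa [show r - 1 - (k + 1) + 1 = r - 1 - k by omega] at this

theorem FirstReturnWord.reverse (h : FirstReturnWord A i r w) :
    FirstReturnWord (flip A) i r (fun k => w (r - 1 - k)) := by
  obtain ⟨hr, hadm, h0, hl, hint⟩ := h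
  refine ⟨hr, hadm.reverse, by simpa using hl, by simpa using h0, fun k hk0 hk => hint _ ?_ ?_⟩ <;>
    omega

theorem MemS.of_flip (h : MemS (flip A) i) : MemS A i := by
  obtain ⟨r, s, w, v, hw, hv, hne⟩ := h
  refine ⟨r, s, _, _, hw.reverse, hv.reverse, ?_⟩
  obtain rfl | hrs := eq_or_ne r s
  · obtain ⟨k, hk, hwv⟩ := hne.resolve_left (not_ne_iff.mpr rfl)
    refine Or.inr ⟨r - 1 - k, by omega, ?_⟩
    rwa [show r - 1 - (r - 1 - k) = k by omega]
  · exact Or.inl hrs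

theorem IsTransitive.flip (h : IsTransitive A) : IsTransitive (flip A) := by
  intro i j
  obtain ⟨r, w, hr, hadm, h0, hl⟩ := h j i
  exact ⟨r, _, hr, hadm.reverse, by simpa using hl, by simpa using h0⟩

theorem IsTransitive.exists_adj (h : IsTransitive A) (i : Fin n) : ∃ j, A i j = true := by
  obtain ⟨r, w, hr, hadm, h0, -⟩ := h i i
  exact ⟨w 1, h0 ▸ hadm 0 (by omega)⟩

theorem exists_firstReturnWord_of_cycle (hr : 2 ≤ r) (hadm : AdmissibleWord A r w)
    (h0 : w 0 = i) (hl : w (r - 1) = i) : ∃ s, FirstReturnWord A i s w := by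
  classical
  have hret : ∃ k, 1 ≤ k ∧ w k = i := ⟨r - 1, by omega, hl⟩
  have hm := Nat.find_spec hret
  have hmr : Nat.find hret ≤ r - 1 := Nat.find_le ⟨by omega, hl⟩
  refine ⟨Nat.find hret + 1, by omega, hadm.mono (by omega), h0, by simpa using hm.2, ?_⟩
  intro k hk0 hk hwk
  exact Nat.find_min hret (by omega : k < Nat.find hret) ⟨hk0, hwk⟩

theorem IsTransitive.exists_firstReturnWord_apply_one (h : IsTransitive A) (ha : A i a = true) :
    ∃ r w, FirstReturnWord A i r w ∧ w 1 = a := by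
  obtain ⟨r, w, hr, hadm, h0, hl⟩ := h a i
  let u : ℕ → Fin n := fun k => match k with
    | 0 => i
    | k + 1 => w k
  have hadm' : AdmissibleWord A (r + 1) u := by
    rintro (_ | k) hk
    · simpa [u, h0] using ha
    · exact hadm k (by omega)
  have hl' : u (r + 1 - 1) = i := by
    obtain ⟨m, rfl⟩ : ∃ m, r = m + 1 := ⟨r - 1, by omega⟩
    exact hl
  obtain ⟨s, hs⟩ := exists_firstReturnWord_of_cycle (by omega) hadm' rfl hl'
  exact ⟨s, u, hs, h0⟩

theorem IsTransitive.memS_of_adj_of_adj (h : IsTransitive A) (ha : A i a = true)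
    (hb : A i b = true) (hab : a ≠ b) : MemS A i := by
  obtain ⟨r, w, hw, hw1⟩ := h.exists_firstReturnWord_apply_one ha
  obtain ⟨s, v, hv, hv1⟩ := h.exists_firstReturnWord_apply_one hb
  exact ⟨r, s, w, v, hw, hv, Or.inr ⟨1, by linarith [hw.1], by rwa [hw1, hv1]⟩⟩

theorem IsTransitive.memS_of_not_existsUnique (h : IsTransitive A)
    (hi : ¬ ∃! j, A i j = true) : MemS A i := by
  obtain ⟨a, ha⟩ := h.exists_adj i
  obtain ⟨b, hb, hba⟩ : ∃ b, A i b = true ∧ b ≠ a := by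
    by_contra! hne
    exact hi ⟨a, ha, hne⟩
  exact h.memS_of_adj_of_adj ha hb hba.symm

end

/-- If `A` is transitive and not a permutation matrix, then `A` satisfies condition (I). -/
theorem transitive_not_permutation_implies_conditionI
    {n : ℕ} (A : Fin n → Fin n → Bool)
    (htrans : ∀ i j : Fin n, ∃ (r : ℕ) (w : ℕ → Fin n),
        2 ≤ r ∧ AdmissibleWord A r w ∧ w 0 = i ∧ w (r - 1) = j)
    (hperm : ¬ ((∀ i : Fin n, ∃! j : Fin n, A i j = true) ∧
                (∀ j : Fin n, ∃! i : Fin n, A i j = true))) :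
    ConditionI A := by
  have hA : IsTransitive A := htrans
  obtain ⟨j, hj⟩ : ∃ j, MemS A j := by
    by_cases hrow : ∀ i : Fin n, ∃! j : Fin n, A i j = true
    · obtain ⟨j, hj⟩ := not_forall.mp fun hcol => hperm ⟨hrow, hcol⟩
      exact ⟨j, (hA.flip.memS_of_not_existsUnique hj).of_flip⟩
    · obtain ⟨i, hi⟩ := not_forall.mp hrow
      exact ⟨i, hA.memS_of_not_existsUnique hi⟩
  intro i
  obtain ⟨r, w, hr, hadm, h0, hl⟩ := htrans i j
  exact ⟨r, w, by omega, hadm, h0, hl ▸ hj⟩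
end

section
/- For a finite transition matrix A (n×n, no zero rows or columns), condition (I) is equivalent to condition (L): every directed cycle in the graph of A has an exit, i.e., for every cycle x_0...x_{k-1} there exist an index m and a symbol y with A(x_m, y) = 1 and y ≠ x_{m+1} (indices mod k). -/
/-- Condition (L): every cycle has an exit. -/
def ConditionL {n : ℕ} (A : Fin n → Fin n → Bool) : Prop :=
  ∀ (k : ℕ) (c : ℕ → Fin n), 1 ≤ k → AdmissibleWord A k c → A (c (k - 1)) (c 0) = true →
    ∃ m, m < k ∧ ∃ y, A (c m) y = true ∧ y ≠ c ((m + 1) % k)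

/-!
If a cycle has no exit, every admissible word starting on it is forced to run around it, so a
vertex reached from the cycle has only one first-return word; this contradicts (I).

Conversely, on a finite graph every vertex `i` reaches a vertex `v` from which every reachable
vertex reaches back. Following a successor of `v` back to `v` gives a cycle; by (L) some vertex
`x` of it has two distinct successors, both of which lead back to `x`. Stopping each of the two
resulting loops at its first return to `x` gives two distinct first-return words, so `x ∈ 𝒮`.
-/

open Relation

theorem exists_reflTransGen_terminal {α : Type*} [Finite α] (R : α → α → Prop) (a : α) :
    ∃ b, ReflTransGen R a b ∧ ∀ c, ReflTransGen R b c → ReflTransGen R c b := by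
  obtain ⟨b, hab, hmin⟩ := (Set.toFinite {b | ReflTransGen R a b}).exists_minimalFor
    (fun b => {c | ReflTransGen R b c}) _ ⟨a, .refl⟩
  exact ⟨b, hab, fun c hbc => hmin (hab.trans hbc) (fun d hcd => hbc.trans hcd) .refl⟩

section Words

variable {n : ℕ} {A : Fin n → Fin n → Bool}

abbrev Reach (A : Fin n → Fin n → Bool) : Fin n → Fin n → Prop :=
  ReflTransGen fun i j => A i j = true

theorem AdmissibleWord.cons {r : ℕ} {w : ℕ → Fin n} {a : Fin n} (hw : AdmissibleWord A r w)
    (ha : A a (w 0) = true) : AdmissibleWord A (r + 1) (Stream'.cons a w)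
  | 0, _ => ha
  | k + 1, hk => hw k (by omega)

theorem AdmissibleWord.reach {r : ℕ} {w : ℕ → Fin n} (hw : AdmissibleWord A r w) :
    ∀ j, j < r → Reach A (w 0) (w j)
  | 0, _ => .refl
  | j + 1, hj => (hw.reach j (by omega)).tail (hw j hj)

theorem AdmissibleWord.step_mod {k m : ℕ} {c : ℕ → Fin n} (hc : AdmissibleWord A k c)
    (hclose : A (c (k - 1)) (c 0) = true) (hm : m < k) : A (c m) (c ((m + 1) % k)) = true := by
  rcases (show m + 1 ≤ k from hm).lt_or_eq with h | h
  · rw [Nat.mod_eq_of_lt h]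
    exact hc m h
  · rw [h, Nat.mod_self, show m = k - 1 by omega]
    exact hclose

theorem Reach.exists_word_first_visit {z x : Fin n} (h : Reach A z x) :
    ∃ l p, 1 ≤ l ∧ AdmissibleWord A l p ∧ p 0 = z ∧ p (l - 1) = x ∧
      ∀ k, k + 1 < l → p k ≠ x := by
  have trivial_word : ∃ l p, 1 ≤ l ∧ AdmissibleWord A l p ∧ p 0 = x ∧ p (l - 1) = x ∧
      ∀ k, k + 1 < l → p k ≠ x :=
    ⟨1, fun _ => x, le_rfl, fun k hk => by omega, rfl, rfl, fun k hk => by omega⟩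
  induction h using ReflTransGen.head_induction_on with
  | refl => exact trivial_word
  | @head a b hab _ ih =>
    obtain ⟨l, p, hl, hp, rfl, hpl, hpx⟩ := ih
    by_cases hax : a = x
    · exact hax ▸ trivial_word
    refine ⟨l + 1, Stream'.cons a p, by omega, hp.cons hab, rfl, ?_, ?_⟩
    · obtain ⟨l, rfl⟩ : ∃ l', l = l' + 1 := ⟨l - 1, by omega⟩
      exact hpl
    · rintro (_ | k) hk
      · exact hax
      · exact hpx k (by omega)

theorem exists_firstReturnWord_of_reach {x z : Fin n} (hxz : A x z = true) (hzx : Reach A z x) :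
    ∃ r w, FirstReturnWord A x r w ∧ w 1 = z := by
  obtain ⟨l, p, hl, hp, rfl, hpl, hpx⟩ := Reach.exists_word_first_visit hzx
  refine ⟨l + 1, Stream'.cons x p, ⟨by omega, hp.cons hxz, rfl, ?_, ?_⟩, rfl⟩
  · obtain ⟨l, rfl⟩ : ∃ l', l = l' + 1 := ⟨l - 1, by omega⟩
    exact hpl
  · rintro (_ | k) hk0 hk
    · omega
    · exact hpx k (by omega)

theorem memS_of_two_successors {x z₁ z₂ : Fin n} (h₁ : A x z₁ = true) (h₂ : A x z₂ = true)
    (hne : z₁ ≠ z₂) (hz₁ : Reach A z₁ x) (hz₂ : Reach A z₂ x) : MemS A x := by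
  obtain ⟨r, w, hw, hw1⟩ := exists_firstReturnWord_of_reach h₁ hz₁
  obtain ⟨s, u, hu, hu1⟩ := exists_firstReturnWord_of_reach h₂ hz₂
  exact ⟨r, s, w, u, hw, hu, .inr ⟨1, hw.1, by rwa [hw1, hu1]⟩⟩

theorem FirstReturnWord.length_eq_of_agree {i : Fin n} {r s : ℕ} {w u : ℕ → Fin n}
    (hw : FirstReturnWord A i r w) (hu : FirstReturnWord A i s u)
    (h : ∀ j, j < r → j < s → w j = u j) : r = s := by
  obtain ⟨hr, -, -, hwr, hwi⟩ := hw
  obtain ⟨hs, -, -, hus, hui⟩ := hu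
  by_contra hne
  rcases Nat.lt_or_gt_of_ne hne with hlt | hlt
  · exact hui (r - 1) (by omega) (by omega) (h (r - 1) (by omega) (by omega) ▸ hwr)
  · exact hwi (s - 1) (by omega) (by omega) (h (s - 1) (by omega) (by omega) ▸ hus)

section Forced

variable {P : Set (Fin n)} (hP : ∀ x ∈ P, ∃ y ∈ P, ∀ z, A x z = true → z = y)
include hP

theorem AdmissibleWord.mem_of_forced {r : ℕ} {w : ℕ → Fin n} (hw : AdmissibleWord A r w)
    (h0 : w 0 ∈ P) : ∀ j, j < r → w j ∈ P := by
  intro j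
  induction j with
  | zero => exact fun _ => h0
  | succ j ih =>
    intro hj
    obtain ⟨y, hy, hforced⟩ := hP _ (ih (by omega))
    exact hforced (w (j + 1)) (hw j hj) ▸ hy

theorem AdmissibleWord.eq_of_forced {r s : ℕ} {w u : ℕ → Fin n} (hw : AdmissibleWord A r w)
    (hu : AdmissibleWord A s u) (h0 : w 0 = u 0) (hP0 : w 0 ∈ P) :
    ∀ j, j < r → j < s → w j = u j := by
  intro j
  induction j with
  | zero => exact fun _ _ => h0
  | succ j ih =>
    intro hr hs
    obtain ⟨y, -, hforced⟩ := hP _ (hw.mem_of_forced hP hP0 j (by omega))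
    have hwu : w j = u j := ih (by omega) (by omega)
    rw [hforced _ (hw j hr), hforced (u (j + 1)) (hwu ▸ hu j hs)]

theorem not_memS_of_forced {x : Fin n} (hx : x ∈ P) : ¬ MemS A x := by
  rintro ⟨r, s, w, u, hw, hu, hne⟩
  have hagree := hw.2.1.eq_of_forced hP hu.2.1 (hw.2.2.1.trans hu.2.2.1.symm) (hw.2.2.1 ▸ hx)
  obtain rfl := hw.length_eq_of_agree hu hagree
  rcases hne with hne | ⟨k, hk, hne⟩
  · exact hne rfl
  · exact hne (hagree k hk hk)

end Forced

theorem conditionL_of_conditionI (hI : ConditionI A) : ConditionL A := by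
  intro k c hk _ _
  by_contra! hex
  obtain ⟨r, w, hr, hw, hw0, hS⟩ := hI (c 0)
  let P : Set (Fin n) := {x | ∃ m < k, c m = x}
  have hP : ∀ x ∈ P, ∃ y ∈ P, ∀ z, A x z = true → z = y := by
    rintro _ ⟨m, hm, rfl⟩
    exact ⟨_, ⟨_, Nat.mod_lt _ (by omega), rfl⟩, hex m hm⟩
  exact not_memS_of_forced hP (hw.mem_of_forced hP (hw0 ▸ ⟨0, hk, rfl⟩) (r - 1) (by omega)) hS

theorem conditionI_of_conditionL (hrow : ∀ i : Fin n, ∃ j, A i j = true) (hL : ConditionL A) :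
    ConditionI A := by
  intro i
  obtain ⟨v, hiv, hv⟩ := exists_reflTransGen_terminal (fun i j => A i j = true) i
  obtain ⟨u, hvu⟩ := hrow v
  obtain ⟨l, p, hl, hp, rfl, hpl, -⟩ := Reach.exists_word_first_visit (hv u (.single hvu))
  have hclose : A (p (l - 1)) (p 0) = true := hpl ▸ hvu
  obtain ⟨m, hm, y, hy, hne⟩ := hL l p hl hp hclose
  have hvx : Reach A v (p m) := .head hvu (hp.reach m hm)
  have back : ∀ z, A (p m) z = true → Reach A z (p m) :=
    fun z hz => (hv z (hvx.tail hz)).trans hvx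
  have hnext := hp.step_mod hclose hm
  have hx := memS_of_two_successors hnext hy hne.symm (back _ hnext) (back y hy)
  obtain ⟨r, w, hr, hw, hw0, hwr, -⟩ := Reach.exists_word_first_visit (hiv.trans hvx)
  exact ⟨r, w, hr, hw, hw0, hwr ▸ hx⟩

end Words

theorem conditionI_iff_conditionL_general
    {n : ℕ} (A : Fin n → Fin n → Bool)
    (hrow : ∀ i : Fin n, ∃ j, A i j = true) :
    ConditionI A ↔ ConditionL A :=
  ⟨conditionL_of_conditionI, conditionI_of_conditionL hrow⟩

/-- For a finite transition matrix with no zero rows or columns, condition (I) is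
equivalent to condition (L). -/
theorem conditionI_iff_conditionL
    {n : ℕ} (A : Fin n → Fin n → Bool)
    (hrow : ∀ i : Fin n, ∃ j, A i j = true)
    (hcol : ∀ j : Fin n, ∃ i, A i j = true) :
    ConditionI A ↔ ConditionL A :=
  conditionI_iff_conditionL_general A hrow
end

section
/- Consider the infinite transition matrix A on alphabet ℕ defined by A(1,2) = 1, A(2n, 2n+2) = 1, A(2n+1, 2n-1) = 1 for all n ≥ 1, and A = 0 elsewhere. Then A has no zero rows and no zero columns, A satisfies condition (L) (vacuously: it has no cycles at all), but A does not satisfy condition (I) (the set 𝒮 of vertices lying on two distinct first-return cycles is empty, yet the alphabet is nonempty). -/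
/-!
Listing the symbols as `… → 5 → 3 → 1 → 2 → 4 → 6 → …`, every edge of `Aline` moves one step
to the right, so the position on this line is a potential that strictly increases along edges.
A graph with such a potential has no cycles, hence no first-return words, so `𝒮` is empty
and condition (I) fails on the nonempty alphabet.
-/

/-- Admissible word over the alphabet `ℕ`. -/
def AdmissibleWordN (A : ℕ → ℕ → Bool) (r : ℕ) (w : ℕ → ℕ) : Prop :=
  ∀ k, k + 1 < r → A (w k) (w (k + 1)) = true

/-- A first-return word at `i`. -/
def FirstReturnWordN (A : ℕ → ℕ → Bool) (i : ℕ) (r : ℕ) (w : ℕ → ℕ) : Prop :=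
  2 ≤ r ∧ AdmissibleWordN A r w ∧ w 0 = i ∧ w (r - 1) = i ∧ ∀ k, 0 < k → k < r - 1 → w k ≠ i

/-- `i` lies in `𝒮`: there are two distinct first-return words at `i`. -/
def MemSN (A : ℕ → ℕ → Bool) (i : ℕ) : Prop :=
  ∃ (r s : ℕ) (w v : ℕ → ℕ), FirstReturnWordN A i r w ∧ FirstReturnWordN A i s v ∧
    (r ≠ s ∨ ∃ k, k < r ∧ w k ≠ v k)

/-- The matrix `A(1,2) = A(2n, 2n+2) = A(2n+1, 2n-1) = 1` (for `n ≥ 1`), zero elsewhere,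
on the alphabet `{1, 2, 3, ...}`. -/
def Aline : ℕ → ℕ → Bool := fun i j =>
  (i == 1 && j == 2) || (decide (2 ≤ i) && decide (i % 2 = 0) && (j == i + 2)) ||
    (decide (3 ≤ i) && decide (i % 2 = 1) && (j + 2 == i))

lemma AdmissibleWordN.mono {A : ℕ → ℕ → Bool} {r s : ℕ} {w : ℕ → ℕ}
    (hw : AdmissibleWordN A r w) (hsr : s ≤ r) : AdmissibleWordN A s w :=
  fun k hk => hw k (by omega)

section Potential

variable {α : Type*} [Preorder α] {A : ℕ → ℕ → Bool} {f : ℕ → α}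

lemma AdmissibleWordN.potential_le (hf : ∀ i j, A i j = true → f i < f j) {r : ℕ}
    {w : ℕ → ℕ} (hw : AdmissibleWordN A r w) : ∀ m, m < r → f (w 0) ≤ f (w m)
  | 0, _ => le_rfl
  | m + 1, hm => (hw.potential_le hf m (by omega)).trans (hf _ _ (hw m hm)).le

lemma not_cycle_of_potential (hf : ∀ i j, A i j = true → f i < f j) {k : ℕ} {c : ℕ → ℕ}
    (hk : 1 ≤ k) (hc : AdmissibleWordN A k c) : A (c (k - 1)) (c 0) ≠ true := fun hclose =>
  ((hc.potential_le hf (k - 1) (by omega)).trans_lt (hf _ _ hclose)).false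

lemma not_firstReturnWordN_of_potential (hf : ∀ i j, A i j = true → f i < f j) (i r : ℕ)
    (w : ℕ → ℕ) : ¬ FirstReturnWordN A i r w := by
  rintro ⟨hr, hw, h0, hlast, -⟩
  have hclose : A (w (r - 1 - 1)) (w 0) = true := by
    have := hw (r - 2) (by omega)
    rwa [show r - 2 + 1 = r - 1 by omega, hlast, ← h0, show r - 2 = r - 1 - 1 by omega] at this
  exact not_cycle_of_potential hf (by omega) (hw.mono (by omega)) hclose

lemma not_memSN_of_potential (hf : ∀ i j, A i j = true → f i < f j) (i : ℕ) :
    ¬ MemSN A i := by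
  rintro ⟨r, -, w, -, hw, -⟩
  exact not_firstReturnWordN_of_potential hf i r w hw

end Potential

def linePosition (i : ℕ) : ℤ := if i % 2 = 0 then i else -i

lemma linePosition_lt_of_Aline {i j : ℕ} (h : Aline i j = true) :
    linePosition i < linePosition j := by
  simp only [Aline, Bool.or_eq_true, Bool.and_eq_true, beq_iff_eq, decide_eq_true_eq] at h
  rcases h with (⟨rfl, rfl⟩ | ⟨⟨-, heven⟩, rfl⟩) | ⟨⟨-, hodd⟩, rfl⟩
  · decide
  · simp only [linePosition, heven, Nat.add_mod_right, if_true]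
    omega
  · simp only [linePosition, show (j + 2) % 2 = j % 2 by omega]
    split_ifs <;> omega

lemma Aline_exists_succ {i : ℕ} (hi : 1 ≤ i) : ∃ j, Aline i j = true := by
  rcases Nat.mod_two_eq_zero_or_one i with heven | hodd
  · exact ⟨i + 2, by simp [Aline]; omega⟩
  · rcases hi.eq_or_lt with rfl | hi
    · exact ⟨2, rfl⟩
    · exact ⟨i - 2, by simp [Aline]; omega⟩

lemma Aline_exists_pred {j : ℕ} (hj : 1 ≤ j) : ∃ i, Aline i j = true := by
  rcases Nat.mod_two_eq_zero_or_one j with heven | hodd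
  · rcases (show 2 ≤ j by omega).eq_or_lt with rfl | hj
    · exact ⟨1, rfl⟩
    · exact ⟨j - 2, by simp [Aline]; omega⟩
  · exact ⟨j + 2, by simp [Aline]; omega⟩

/-- The matrix `Aline` has no zero rows and no zero columns (over the alphabet of
positive integers), has no cycles at all — so it satisfies condition (L) vacuously —
its set `𝒮` is empty, and it does not satisfy condition (I). -/
theorem Aline_conditionL_not_conditionI :
    (∀ i : ℕ, 1 ≤ i → ∃ j, Aline i j = true) ∧
    (∀ j : ℕ, 1 ≤ j → ∃ i, Aline i j = true) ∧
    (∀ (k : ℕ) (c : ℕ → ℕ), 1 ≤ k → AdmissibleWordN Aline k c →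
        Aline (c (k - 1)) (c 0) ≠ true) ∧
    (∀ (k : ℕ) (c : ℕ → ℕ), 1 ≤ k → AdmissibleWordN Aline k c →
        Aline (c (k - 1)) (c 0) = true →
        ∃ m, m < k ∧ ∃ y, Aline (c m) y = true ∧ y ≠ c ((m + 1) % k)) ∧
    (∀ i : ℕ, ¬ MemSN Aline i) ∧
    ¬ (∀ i : ℕ, 1 ≤ i → ∃ (r : ℕ) (w : ℕ → ℕ),
        1 ≤ r ∧ AdmissibleWordN Aline r w ∧ w 0 = i ∧ MemSN Aline (w (r - 1))) := by
  have hf : ∀ i j, Aline i j = true → linePosition i < linePosition j :=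
    fun _ _ => linePosition_lt_of_Aline
  have hnoCycle : ∀ (k : ℕ) (c : ℕ → ℕ), 1 ≤ k → AdmissibleWordN Aline k c →
      Aline (c (k - 1)) (c 0) ≠ true := fun _ _ => not_cycle_of_potential hf
  refine ⟨fun _ => Aline_exists_succ, fun _ => Aline_exists_pred, hnoCycle,
    fun k c hk hc hclose => absurd hclose (hnoCycle k c hk hc), not_memSN_of_potential hf, ?_⟩
  intro hI
  obtain ⟨r, w, -, -, -, hS⟩ := hI 1 le_rfl
  exact not_memSN_of_potential hf _ hS
end

section
/- Every configuration ξ ∈ Ω_A^τ determines a unique positive admissible word ω (finite or infinite), called the stem of ξ, such that the set of positive group elements filled in ξ equals the set of finite prefixes of ω: {g ∈ 𝔽 : ξ_g = 1} ∩ 𝔽₊ = ⟦ω⟧. -/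
/-- The positive element of the free group `𝔽 = F(ℕ)` associated to a finite word. -/
def listToF (l : List ℕ) : FreeGroup ℕ := (l.map FreeGroup.of).prod

/-- An element of the free group is positive if it is a product of generators. -/
def IsPositive (g : FreeGroup ℕ) : Prop := ∃ l : List ℕ, g = listToF l

/-- The word-metric distance in the Cayley tree of the free group. -/
def fgDist (a b : FreeGroup ℕ) : ℕ := (FreeGroup.toWord (a⁻¹ * b)).length

/-- The rules (R1)-(R4) defining the set `Ω_A^τ` of configurations on the Cayley tree:
`ξ_e = 1`; `ξ` is convex (geodesics between filled vertices are filled); a filled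
vertex has at most one filled positive successor; and roots are governed by `A`. -/
def OmegaTau (A : ℕ → ℕ → Bool) (ξ : FreeGroup ℕ → Bool) : Prop :=
  ξ 1 = true ∧
  (∀ a b c : FreeGroup ℕ, ξ a = true → ξ b = true →
    fgDist a c + fgDist c b = fgDist a b → ξ c = true) ∧
  (∀ g : FreeGroup ℕ, ξ g = true → ∀ y z : ℕ,
    ξ (g * FreeGroup.of y) = true → ξ (g * FreeGroup.of z) = true → y = z) ∧
  (∀ (g : FreeGroup ℕ) (y : ℕ), ξ g = true → ξ (g * FreeGroup.of y) = true →
    ∀ x : ℕ, (ξ (g * (FreeGroup.of x)⁻¹) = true ↔ A x y = true))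

/-! Convexity makes the filled positive words prefix-closed, and (R3) allows at most one filled
one-letter extension of each, so there is at most one filled positive word of each length: they
are the prefixes of a single finite or infinite word `ω`, whose `k`-th letter is the `k`-th letter
of any filled word that is long enough. Admissibility of `ω` is (R4) applied at the filled vertex
`ω₀ ⋯ ω_k`, whose predecessor `ω₀ ⋯ ω_{k-1}` and successor `ω₀ ⋯ ω_{k+1}` are filled. -/

lemma ENat.natCast_le_iSup_natCast_iff {ι : Type*} [Nonempty ι] {f : ι → ℕ} {n : ℕ} :
    (n : ℕ∞) ≤ ⨆ i, (f i : ℕ∞) ↔ ∃ i, n ≤ f i := by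
  refine ⟨fun h => ?_, fun ⟨i, hi⟩ => (Nat.cast_le.2 hi).trans (le_iSup (fun i => (f i : ℕ∞)) i)⟩
  rcases eq_top_or_lt_top (⨆ i, (f i : ℕ∞)) with htop | hlt
  · obtain ⟨i, hi⟩ := lt_iSup_iff.1 (htop ▸ ENat.natCast_lt_top n)
    exact ⟨i, by exact_mod_cast hi.le⟩
  · obtain ⟨i, hi⟩ := ENat.exists_eq_iSup_of_lt_top hlt
    exact ⟨i, by rw [← hi] at h; exact_mod_cast h⟩

namespace List

variable {α : Type*}

/-- For `L = ⊤` this is the paper's `⟦ω⟧`; for finite `L` only `ω 0, …, ω (L - 1)` matter. -/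
def prefixSet (L : ℕ∞) (ω : ℕ → α) : Set (List α) :=
  {l | (l.length : ℕ∞) ≤ L ∧ ∀ i (h : i < l.length), l[i] = ω i}

lemma mem_prefixSet_iff_getD {L : ℕ∞} {ω : ℕ → α} {l : List α} (d : α) :
    l ∈ prefixSet L ω ↔ (l.length : ℕ∞) ≤ L ∧ ∀ i, i < l.length → l.getD i d = ω i :=
  and_congr_right fun _ => forall_congr' fun _ =>
    ⟨fun h hi => (getD_eq_getElem _ _ hi).trans (h hi),
      fun h hi => (getD_eq_getElem _ _ hi).symm.trans (h hi)⟩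

lemma map_range_mem_prefixSet {L : ℕ∞} {ω : ℕ → α} {n : ℕ} (hn : (n : ℕ∞) ≤ L) :
    (range n).map ω ∈ prefixSet L ω :=
  ⟨by simpa using hn, by simp⟩

lemma le_and_eq_of_prefixSet_subset {L L' : ℕ∞} {ω ω' : ℕ → α}
    (h : prefixSet L ω ⊆ prefixSet L' ω') : L ≤ L' ∧ ∀ k : ℕ, (k : ℕ∞) < L → ω k = ω' k := by
  have mem {n : ℕ} (hn : (n : ℕ∞) ≤ L) := h (map_range_mem_prefixSet hn)
  refine ⟨ENat.forall_natCast_le_iff_le.1 fun n hn => by simpa using (mem hn).1, fun k hk => ?_⟩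
  simpa using (mem (Order.add_one_le_of_lt hk)).2 k (by simp)

lemma prefixSet_injective {L L' : ℕ∞} {ω ω' : ℕ → α} (h : prefixSet L ω = prefixSet L' ω') :
    L = L' ∧ ∀ k : ℕ, (k : ℕ∞) < L → ω k = ω' k :=
  ⟨(le_and_eq_of_prefixSet_subset h.le).1.antisymm (le_and_eq_of_prefixSet_subset h.ge).1,
    (le_and_eq_of_prefixSet_subset h.le).2⟩

structure IsBranch (F : Set (List α)) : Prop where
  nil_mem : [] ∈ F
  mem_of_prefix {l₁ l₂ : List α} : l₁ <+: l₂ → l₂ ∈ F → l₁ ∈ F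
  eq_of_concat_mem {l : List α} {y z : α} : l ++ [y] ∈ F → l ++ [z] ∈ F → y = z

namespace IsBranch

variable {F : Set (List α)}

lemma eq_of_length_eq (hF : IsBranch F) {l₁ l₂ : List α} (h₁ : l₁ ∈ F) (h₂ : l₂ ∈ F)
    (hlen : l₁.length = l₂.length) : l₁ = l₂ := by
  induction l₁ using reverseRecOn generalizing l₂ with
  | nil => exact (length_eq_zero_iff.1 hlen.symm).symm
  | append_singleton l₁ y ih =>
    obtain ⟨l₂, z, rfl⟩ := (eq_nil_or_concat' l₂).resolve_left (by rintro rfl; simp at hlen)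
    have hl : l₁ = l₂ := ih (hF.mem_of_prefix (prefix_append _ _) h₁)
      (hF.mem_of_prefix (prefix_append _ _) h₂) (by simpa using hlen)
    subst hl
    rw [hF.eq_of_concat_mem h₁ h₂]

lemma getElem_eq (hF : IsBranch F) {l₁ l₂ : List α} (h₁ : l₁ ∈ F) (h₂ : l₂ ∈ F) {i : ℕ}
    (hi₁ : i < l₁.length) (hi₂ : i < l₂.length) : l₁[i] = l₂[i] := by
  have htake : l₁.take (i + 1) = l₂.take (i + 1) :=
    hF.eq_of_length_eq (hF.mem_of_prefix (take_prefix _ _) h₁)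
      (hF.mem_of_prefix (take_prefix _ _) h₂) (by simp only [length_take]; omega)
  simpa [getElem?_eq_getElem hi₁, getElem?_eq_getElem hi₂] using congrArg (·[i]?) htake

theorem exists_eq_prefixSet [Nonempty α] (hF : IsBranch F) : ∃ L ω, F = prefixSet L ω := by
  have : Nonempty F := ⟨⟨[], hF.nil_mem⟩⟩
  let ω (k : ℕ) : α := Classical.epsilon fun y => ∃ l ∈ F, ∃ h : k < l.length, l[k] = y
  have getElem_eq_ω {l : List α} (hl : l ∈ F) (k : ℕ) (hk : k < l.length) : l[k] = ω k := by
    obtain ⟨l', hl', hk', h⟩ := Classical.epsilon_spec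
      (p := fun y => ∃ l ∈ F, ∃ h : k < l.length, l[k] = y) ⟨l[k], l, hl, hk, rfl⟩
    exact (hF.getElem_eq hl hl' hk hk').trans h
  refine ⟨⨆ l : F, (l.1.length : ℕ∞), ω, Set.ext fun l =>
    ⟨fun hl => ⟨le_iSup (fun l : F => (l.1.length : ℕ∞)) ⟨l, hl⟩, getElem_eq_ω hl⟩, ?_⟩⟩
  rintro ⟨hlen, hω⟩
  obtain ⟨⟨l', hl'⟩, hle⟩ := ENat.natCast_le_iSup_natCast_iff.1 hlen
  convert hF.mem_of_prefix (take_prefix l.length l') hl' using 1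
  refine ext_getElem (by simpa using hle) fun i h₁ h₂ => ?_
  rw [hω, getElem_take, getElem_eq_ω hl']

end IsBranch

end List

lemma listToF_append (l₁ l₂ : List ℕ) : listToF (l₁ ++ l₂) = listToF l₁ * listToF l₂ := by
  simp [listToF]

lemma listToF_eq_mk (l : List ℕ) : listToF l = FreeGroup.mk (l.map fun x => (x, true)) := by
  induction l with
  | nil => rfl
  | cons a l ih => rw [listToF, List.map_cons, List.prod_cons, ← listToF, ih]; rfl

lemma toWord_listToF (l : List ℕ) : (listToF l).toWord = l.map fun x => (x, true) := by
  rw [listToF_eq_mk, FreeGroup.toWord_mk, FreeGroup.IsReduced.reduce_eq]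
  exact List.isChain_iff_getElem.2 fun i _ _ => by simp

lemma listToF_injective : Function.Injective listToF := fun l₁ l₂ h =>
  List.map_injective_iff.2 (Prod.mk_left_injective true) <| by
    simpa only [toWord_listToF] using congrArg FreeGroup.toWord h

lemma fgDist_listToF_append (l₁ l₂ : List ℕ) :
    fgDist (listToF l₁) (listToF (l₁ ++ l₂)) = l₂.length := by
  simp [fgDist, listToF_append, toWord_listToF]

def filledWords (ξ : FreeGroup ℕ → Bool) : Set (List ℕ) := {l | ξ (listToF l) = true}

lemma forall_isPositive_and_iff {ξ : FreeGroup ℕ → Bool} {S : Set (List ℕ)} :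
    (∀ g, (IsPositive g ∧ ξ g = true) ↔ ∃ l, g = listToF l ∧ l ∈ S) ↔ filledWords ξ = S := by
  refine ⟨fun h => Set.ext fun l => ?_, fun h g => ?_⟩
  · refine ⟨fun hl => ?_, fun hS => ((h _).2 ⟨l, rfl, hS⟩).2⟩
    obtain ⟨l', hl', hS⟩ := (h _).1 ⟨⟨l, rfl⟩, hl⟩
    rwa [listToF_injective hl']
  · subst h
    exact ⟨fun ⟨⟨l, hl⟩, hg⟩ => ⟨l, hl, by rwa [hl] at hg⟩,
      fun ⟨l, hl, hg⟩ => ⟨⟨l, hl⟩, by rwa [hl]⟩⟩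

namespace OmegaTau

variable {A : ℕ → ℕ → Bool} {ξ : FreeGroup ℕ → Bool}

lemma mem_filledWords_of_prefix (hξ : OmegaTau A ξ) {l₁ l₂ : List ℕ} (h : l₁ <+: l₂)
    (h₂ : l₂ ∈ filledWords ξ) : l₁ ∈ filledWords ξ := by
  obtain ⟨l, rfl⟩ := h
  -- convexity, along the geodesic `1 — listToF l₁ — listToF (l₁ ++ l)`
  refine hξ.2.1 (listToF []) (listToF (l₁ ++ l)) (listToF l₁) hξ.1 h₂ ?_
  have h₁ := fgDist_listToF_append [] l₁
  have h₂ := fgDist_listToF_append [] (l₁ ++ l)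
  rw [List.nil_append] at h₁ h₂
  rw [h₁, h₂, fgDist_listToF_append, List.length_append]

lemma isBranch (hξ : OmegaTau A ξ) : List.IsBranch (filledWords ξ) where
  nil_mem := hξ.1
  mem_of_prefix := hξ.mem_filledWords_of_prefix
  eq_of_concat_mem {l y z} hy hz := by
    have hl := hξ.mem_filledWords_of_prefix (List.prefix_append l [y]) hy
    refine hξ.2.2.1 (listToF l) hl y z ?_ ?_
    · simpa [filledWords, listToF_append, listToF] using hy
    · simpa [filledWords, listToF_append, listToF] using hz

lemma admissible_of_mem (hξ : OmegaTau A ξ) {l : List ℕ} {x y : ℕ}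
    (h : l ++ [x, y] ∈ filledWords ξ) : A x y = true := by
  have hx : l ++ [x] ∈ filledWords ξ := hξ.mem_filledWords_of_prefix ⟨[y], by simp⟩ h
  refine (hξ.2.2.2 (listToF (l ++ [x])) y hx ?_ x).1 ?_
  · simpa [filledWords, listToF_append, listToF, mul_assoc] using h
  · simpa [filledWords, listToF_append, listToF] using
      hξ.mem_filledWords_of_prefix (List.prefix_append l _) h

lemma admissible_of_filledWords_eq (hξ : OmegaTau A ξ) {L : ℕ∞} {ω : ℕ → ℕ}
    (hL : filledWords ξ = List.prefixSet L ω) {k : ℕ} (hk : ((k + 1 : ℕ) : ℕ∞) < L) :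
    A (ω k) (ω (k + 1)) = true := by
  refine hξ.admissible_of_mem (l := (List.range k).map ω) ?_
  have := List.map_range_mem_prefixSet (n := k + 1 + 1) (ω := ω)
    (by exact_mod_cast Order.add_one_le_of_lt hk)
  rw [List.range_succ, List.range_succ] at this
  simpa [hL] using this

end OmegaTau

/-- Every configuration `ξ ∈ Ω_A^τ` has a unique stem: a positive admissible word
(finite of length `L` or infinite, `L = ⊤`) whose set of finite prefixes is exactly the
set of positive elements of the free group filled in `ξ`. -/
theorem omegaTau_exists_unique_stem
    (A : ℕ → ℕ → Bool) (ξ : FreeGroup ℕ → Bool) (hξ : OmegaTau A ξ) :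
    ∃ (L : ℕ∞) (ω : ℕ → ℕ),
      (∀ k : ℕ, ((k + 1 : ℕ) : ℕ∞) < L → A (ω k) (ω (k + 1)) = true) ∧
      (∀ g : FreeGroup ℕ,
        (IsPositive g ∧ ξ g = true) ↔
          ∃ l : List ℕ, g = listToF l ∧ (l.length : ℕ∞) ≤ L ∧
            ∀ i, i < l.length → l.getD i 0 = ω i) ∧
      (∀ (L' : ℕ∞) (ω' : ℕ → ℕ),
        ((∀ k : ℕ, ((k + 1 : ℕ) : ℕ∞) < L' → A (ω' k) (ω' (k + 1)) = true) ∧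
         (∀ g : FreeGroup ℕ,
            (IsPositive g ∧ ξ g = true) ↔
              ∃ l : List ℕ, g = listToF l ∧ (l.length : ℕ∞) ≤ L' ∧
                ∀ i, i < l.length → l.getD i 0 = ω' i)) →
        (L' = L ∧ ∀ k : ℕ, (k : ℕ∞) < L → ω' k = ω k)) := by
  simp only [← List.mem_prefixSet_iff_getD, forall_isPositive_and_iff]
  obtain ⟨L, ω, hL⟩ := hξ.isBranch.exists_eq_prefixSet
  refine ⟨L, ω, fun k => hξ.admissible_of_filledWords_eq hL, hL, fun L' ω' ⟨_, hL'⟩ => ?_⟩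
  obtain ⟨hLL', hωω'⟩ := List.prefixSet_injective (hL'.symm.trans hL)
  exact ⟨hLL', fun k hk => hωω' k (hLL' ▸ hk)⟩
end

section
/- Let X be a Hausdorff topological space, U, V open subsets, and T : U → V a local homeomorphism. Then the Renault-Deaconu groupoid G(X,T) = {(x, n−m, y) : n,m ∈ ℕ, x ∈ Dom(T^n), y ∈ Dom(T^m), T^n(x) = T^m(y)}, equipped with the topology generated by the sets W(n,m,U',V') = {(x, n−m, y) : x ∈ U', y ∈ V', T^n x = T^m y} for U' ⊆ Dom(T^n), V' ⊆ Dom(T^m) open with T^n|_{U'}, T^m|_{V'} injective, is a Hausdorff topological space. -/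
/-- The maximal domain of the `p`-th iterate of the partially defined map `T` with
domain `D`: points whose first `p` iterates stay in `D`. -/
def IterDom {X : Type*} (T : X → X) (D : Set X) (p : ℕ) : Set X :=
  {x | ∀ k, k < p → T^[k] x ∈ D}

/-- The underlying set of the Renault-Deaconu groupoid `G(X,T)`. -/
def RDSet {X : Type*} (T : X → X) (D : Set X) : Set (X × ℤ × X) :=
  {z | ∃ n m : ℕ, z.2.1 = (n : ℤ) - (m : ℤ) ∧ z.1 ∈ IterDom T D n ∧
    z.2.2 ∈ IterDom T D m ∧ T^[n] z.1 = T^[m] z.2.2}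

/-- The basic open sets `W(n, m, U, V)` of the Renault-Deaconu groupoid. -/
def RDBasis {X : Type*} [TopologicalSpace X] (T : X → X) (D : Set X) :
    Set (Set {z : X × ℤ × X // z ∈ RDSet T D}) :=
  {S | ∃ (n m : ℕ) (U V : Set X), IsOpen U ∧ IsOpen V ∧
    U ⊆ IterDom T D n ∧ V ⊆ IterDom T D m ∧
    Set.InjOn (T^[n]) U ∧ Set.InjOn (T^[m]) V ∧
    S = {z | z.1.2.1 = (n : ℤ) - (m : ℤ) ∧ z.1.1 ∈ U ∧ z.1.2.2 ∈ V ∧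
          T^[n] z.1.1 = T^[m] z.1.2.2}}

/-!
The inclusion of `G(X,T)` into `X × ℤ × X` is injective, and it is continuous for the
topology generated by the sets `W(n,m,U,V)`: every point `(x, n - m, y)` lies in some
`W(n,m,U,V)` with `U`, `V` inside prescribed neighbourhoods of `x`, `y`, because `T^[n]` is
injective near every point of its domain. Hence `G(X,T)` inherits the Hausdorff property of
`X × ℤ × X`.
-/

open Set Function TopologicalSpace Topology

theorem continuous_generateFrom_of_forall_exists {α β : Type*} [TopologicalSpace β]
    {g : Set (Set α)} {f : α → β}
    (h : ∀ a N, IsOpen N → f a ∈ N → ∃ S ∈ g, a ∈ S ∧ S ⊆ f ⁻¹' N) :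
    Continuous[generateFrom g, inferInstance] f := by
  let := generateFrom g
  refine continuous_def.mpr fun N hN => isOpen_iff_forall_mem_open.mpr fun a ha => ?_
  obtain ⟨S, hSg, haS, hSN⟩ := h a N hN ha
  exact ⟨S, hSN, isOpen_generateFrom_of_mem hSg, haS⟩

namespace IterDom

variable {X : Type*} {T : X → X} {D : Set X}

theorem zero_eq_univ : IterDom T D 0 = univ :=
  eq_univ_of_forall fun _ _ hk => absurd hk (Nat.not_lt_zero _)

theorem mem_succ {n : ℕ} {x : X} : x ∈ IterDom T D (n + 1) ↔ x ∈ D ∧ T x ∈ IterDom T D n := by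
  refine ⟨fun hx => ⟨hx 0 n.succ_pos, fun k hk => ?_⟩, fun ⟨hxD, hTx⟩ k hk => ?_⟩
  · simpa only [iterate_succ_apply] using hx (k + 1) (by omega)
  · cases k with
    | zero => exact hxD
    | succ k => simpa only [iterate_succ_apply] using hTx k (by omega)

theorem exists_isOpen_injOn [TopologicalSpace X] (hD : IsOpen D)
    (hT : IsLocalHomeomorphOn T D) {n : ℕ} {x : X} (hx : x ∈ IterDom T D n) :
    ∃ U, IsOpen U ∧ x ∈ U ∧ U ⊆ IterDom T D n ∧ InjOn (T^[n]) U := by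
  induction n generalizing x with
  | zero => exact ⟨univ, isOpen_univ, trivial, zero_eq_univ.ge, by simp [InjOn]⟩
  | succ n ih =>
    obtain ⟨hxD, hTx⟩ := mem_succ.mp hx
    obtain ⟨W, hWo, hTxW, hWsub, hWinj⟩ := ih hTx
    obtain ⟨e, hxe, rfl⟩ := hT x hxD
    refine ⟨e.source ∩ e ⁻¹' W ∩ D, (e.isOpen_inter_preimage hWo).inter hD,
      ⟨⟨hxe, hTxW⟩, hxD⟩, fun a ha => mem_succ.mpr ⟨ha.2, hWsub ha.1.2⟩, ?_⟩
    rintro a ⟨⟨hae, haW⟩, -⟩ b ⟨⟨hbe, hbW⟩, -⟩ hab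
    simp only [iterate_succ_apply] at hab
    exact e.injOn hae hbe (hWinj haW hbW hab)

end IterDom

section RenaultDeaconu

variable {X : Type*} [TopologicalSpace X] {T : X → X} {D : Set X}

theorem RDBasis.exists_mem_subset (hD : IsOpen D) (hT : IsLocalHomeomorphOn T D)
    (z : {z : X × ℤ × X // z ∈ RDSet T D}) {A B : Set X} (hA : IsOpen A) (hB : IsOpen B)
    (hxA : z.1.1 ∈ A) (hyB : z.1.2.2 ∈ B) :
    ∃ S ∈ RDBasis T D, z ∈ S ∧
      ∀ w ∈ S, w.1.2.1 = z.1.2.1 ∧ w.1.1 ∈ A ∧ w.1.2.2 ∈ B := by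
  obtain ⟨n, m, hk, hx, hy, hxy⟩ := z.2
  obtain ⟨U, hUo, hxU, hUsub, hUinj⟩ := IterDom.exists_isOpen_injOn hD hT hx
  obtain ⟨V, hVo, hyV, hVsub, hVinj⟩ := IterDom.exists_isOpen_injOn hD hT hy
  refine ⟨_, ⟨n, m, U ∩ A, V ∩ B, hUo.inter hA, hVo.inter hB,
    inter_subset_left.trans hUsub, inter_subset_left.trans hVsub,
    hUinj.mono inter_subset_left, hVinj.mono inter_subset_left, rfl⟩,
    ⟨hk, ⟨hxU, hxA⟩, ⟨hyV, hyB⟩, hxy⟩,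
    fun w hw => ⟨hw.1.trans hk.symm, hw.2.1.2, hw.2.2.1.2⟩⟩

theorem RDBasis.continuous_val (hD : IsOpen D) (hT : IsLocalHomeomorphOn T D) :
    Continuous[generateFrom (RDBasis T D), inferInstance]
      (Subtype.val : {z : X × ℤ × X // z ∈ RDSet T D} → X × ℤ × X) := by
  let := generateFrom (RDBasis T D)
  have hsrc : Continuous fun z : {z : X × ℤ × X // z ∈ RDSet T D} => z.1.1 :=
    continuous_generateFrom_of_forall_exists fun z A hA hxA => by
      obtain ⟨S, hS, hzS, hSsub⟩ := exists_mem_subset hD hT z hA isOpen_univ hxA trivial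
      exact ⟨S, hS, hzS, fun w hw => (hSsub w hw).2.1⟩
  have hlag : Continuous fun z : {z : X × ℤ × X // z ∈ RDSet T D} => z.1.2.1 :=
    continuous_generateFrom_of_forall_exists fun z N _ hkN => by
      obtain ⟨S, hS, hzS, hSsub⟩ :=
        exists_mem_subset hD hT z isOpen_univ isOpen_univ trivial trivial
      exact ⟨S, hS, hzS, fun w hw => show w.1.2.1 ∈ N from (hSsub w hw).1 ▸ hkN⟩
  have htgt : Continuous fun z : {z : X × ℤ × X // z ∈ RDSet T D} => z.1.2.2 :=
    continuous_generateFrom_of_forall_exists fun z B hB hyB => by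
      obtain ⟨S, hS, hzS, hSsub⟩ := exists_mem_subset hD hT z isOpen_univ hB trivial hyB
      exact ⟨S, hS, hzS, fun w hw => (hSsub w hw).2.2⟩
  exact hsrc.prodMk (hlag.prodMk htgt)

end RenaultDeaconu

/-- If `X` is Hausdorff and `T` is a local homeomorphism defined on an open subset
`D ⊆ X`, then the Renault-Deaconu groupoid `G(X,T)`, with the topology generated by the
sets `W(n,m,U,V)`, is a Hausdorff topological space. -/
theorem renaultDeaconu_groupoid_t2Space
    {X : Type*} [TopologicalSpace X] [T2Space X] (T : X → X) (D : Set X)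
    (hD : IsOpen D) (hT : IsLocalHomeomorphOn T D) :
    @T2Space {z : X × ℤ × X // z ∈ RDSet T D}
      (TopologicalSpace.generateFrom (RDBasis T D)) :=
  letI := generateFrom (RDBasis T D)
  T2Space.of_injective_continuous Subtype.val_injective (RDBasis.continuous_val hD hT)
end
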